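/- Let D be the lattice of all principal ℓ-ideals of an abelian lattice-ordered group G. Then D satisfies: for every family (𝐚ᵢ)_{i∈I} in D there exists a family (𝐜_{i,j})_{(i,j)∈I×I} in D such that 𝐚ᵢ = (𝐚ᵢ ⊓ 𝐚ⱼ) ⊔ 𝐜_{i,j}, 𝐜_{i,j} ⊓ 𝐜_{j,i} = 0, and 𝐜_{i,k} ≤ 𝐜_{i,j} ⊔ 𝐜_{j,k}, for all i, j, k ∈ I. -/
import Mathlib


/-- An ℓ-ideal of an abelian lattice-ordered group: a subgroup which is an
order-convex sublattice. -/
def IsLIdeal {G : Type*} [Lattice G] [AddCommGroup G] (I : Set G) : Prop :=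
  (0 : G) ∈ I ∧ (∀ x y : G, x ∈ I → y ∈ I → x - y ∈ I) ∧
  (∀ x y : G, x ∈ I → y ∈ I → x ⊔ y ∈ I) ∧
  (∀ x y : G, x ∈ I → y ∈ I → x ⊓ y ∈ I) ∧
  (∀ x y z : G, x ∈ I → z ∈ I → x ≤ y → y ≤ z → y ∈ I)

/-- The ℓ-ideal of `G` generated by an element `x`. -/
def lIdealGen {G : Type*} [Lattice G] [AddCommGroup G] (x : G) : Set G :=
  ⋂₀ {I : Set G | IsLIdeal I ∧ x ∈ I}

/-- The join of two ℓ-ideals: the smallest ℓ-ideal containing both. -/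
def lIdealJoin {G : Type*} [Lattice G] [AddCommGroup G] (P Q : Set G) : Set G :=
  ⋂₀ {I : Set G | IsLIdeal I ∧ P ⊆ I ∧ Q ⊆ I}


section Helpers
set_option linter.unusedSectionVars false
variable {G : Type*} [Lattice G] [AddCommGroup G] [CovariantClass G G (· + ·) (· ≤ ·)]

lemma myAbs_le {x b : G} (h1 : x ≤ b) (h2 : -x ≤ b) : |x| ≤ b := sup_le h1 h2

lemma myAbs_add (x y : G) : |x + y| ≤ |x| + |y| := by
  refine myAbs_le (add_le_add (le_abs_self x) (le_abs_self y)) ?_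
  rw [neg_add]
  exact add_le_add (neg_le_abs x) (neg_le_abs y)

lemma myAbs_sub (x y : G) : |x - y| ≤ |x| + |y| := by
  rw [sub_eq_add_neg]
  simpa using myAbs_add x (-y)

lemma myAbs_sup (x y : G) : |x ⊔ y| ≤ |x| + |y| := by
  have hx : x ≤ |x| + |y| := (le_abs_self x).trans (le_add_of_nonneg_right (abs_nonneg y))
  have hy : y ≤ |x| + |y| := (le_abs_self y).trans (le_add_of_nonneg_left (abs_nonneg x))
  refine myAbs_le (sup_le hx hy) ?_
  rw [neg_sup]
  exact inf_le_left.trans ((neg_le_abs x).trans (le_add_of_nonneg_right (abs_nonneg y)))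

lemma myAbs_inf (x y : G) : |x ⊓ y| ≤ |x| + |y| := by
  have hx : x ⊓ y ≤ |x| + |y| :=
    inf_le_left.trans ((le_abs_self x).trans (le_add_of_nonneg_right (abs_nonneg y)))
  refine myAbs_le hx ?_
  rw [neg_inf]
  refine sup_le ?_ ?_
  · exact (neg_le_abs x).trans (le_add_of_nonneg_right (abs_nonneg y))
  · exact (neg_le_abs y).trans (le_add_of_nonneg_left (abs_nonneg x))

/-- `w ⊓ (a + b) ≤ w ⊓ a + w ⊓ b` for nonnegative `a b w`. -/
lemma inf_add_dist {w a b : G} (hw : 0 ≤ w) (ha : 0 ≤ a) (hb : 0 ≤ b) :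
    w ⊓ (a + b) ≤ w ⊓ a + w ⊓ b := by
  have : w ⊓ a + w ⊓ b = ((w + w) ⊓ (a + w)) ⊓ ((w + b) ⊓ (a + b)) := by
    rw [inf_add, add_inf, add_inf]
    ac_rfl
  rw [this]
  refine le_inf (le_inf ?_ ?_) (le_inf ?_ inf_le_right)
  · exact inf_le_left.trans (le_add_of_nonneg_left hw)
  · exact inf_le_left.trans (le_add_of_nonneg_left ha)
  · exact inf_le_left.trans (le_add_of_nonneg_right hb)


lemma IsLIdeal.neg_mem {I : Set G} (h : IsLIdeal I) {x : G} (hx : x ∈ I) : -x ∈ I := by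
  simpa using h.2.1 0 x h.1 hx

lemma IsLIdeal.add_mem {I : Set G} (h : IsLIdeal I) {x y : G} (hx : x ∈ I) (hy : y ∈ I) :
    x + y ∈ I := by
  simpa [sub_neg_eq_add] using h.2.1 x (-y) hx (h.neg_mem hy)

lemma IsLIdeal.abs_mem {I : Set G} (h : IsLIdeal I) {x : G} (hx : x ∈ I) : |x| ∈ I :=
  h.2.2.1 x (-x) hx (h.neg_mem hx)

lemma IsLIdeal.mem_of_abs_le {I : Set G} (h : IsLIdeal I) {x z : G} (hz : z ∈ I)
    (hle : |x| ≤ z) : x ∈ I :=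
  h.2.2.2.2 (-z) x z (h.neg_mem hz) hz (neg_le_of_neg_le ((neg_le_abs x).trans hle))
    ((le_abs_self x).trans hle)

lemma isLIdeal_sInter {S : Set (Set G)} (h : ∀ I ∈ S, IsLIdeal I) : IsLIdeal (⋂₀ S) := by
  refine ⟨fun I hI => (h I hI).1, fun x y hx hy I hI => (h I hI).2.1 x y (hx I hI) (hy I hI),
    fun x y hx hy I hI => (h I hI).2.2.1 x y (hx I hI) (hy I hI),
    fun x y hx hy I hI => (h I hI).2.2.2.1 x y (hx I hI) (hy I hI),
    fun x y z hx hz h1 h2 I hI => (h I hI).2.2.2.2 x y z (hx I hI) (hz I hI) h1 h2⟩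

lemma isLIdeal_gen (x : G) : IsLIdeal (lIdealGen x) :=
  isLIdeal_sInter fun _ hI => hI.1

lemma mem_gen_self (x : G) : x ∈ lIdealGen x := fun _ hI => hI.2

lemma gen_subset {I : Set G} (h : IsLIdeal I) {x : G} (hx : x ∈ I) : lIdealGen x ⊆ I :=
  Set.sInter_subset_of_mem ⟨h, hx⟩

lemma isLIdeal_join (P Q : Set G) : IsLIdeal (lIdealJoin P Q) :=
  isLIdeal_sInter fun _ hI => hI.1

lemma subset_join_left (P Q : Set G) : P ⊆ lIdealJoin P Q :=
  fun x hx _ hI => hI.2.1 hx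

lemma subset_join_right (P Q : Set G) : Q ⊆ lIdealJoin P Q :=
  fun x hx _ hI => hI.2.2 hx

lemma join_subset {P Q I : Set G} (h : IsLIdeal I) (hP : P ⊆ I) (hQ : Q ⊆ I) :
    lIdealJoin P Q ⊆ I :=
  Set.sInter_subset_of_mem ⟨h, hP, hQ⟩

/-- The polar `{g | |g| ⊓ w = 0}` is an ℓ-ideal, for `0 ≤ w`. -/
lemma isLIdeal_polar {w : G} (hw : 0 ≤ w) : IsLIdeal {g : G | |g| ⊓ w = 0} := by
  have key : ∀ x y z : G, |x| ⊓ w = 0 → |y| ⊓ w = 0 → |z| ≤ |x| + |y| → |z| ⊓ w = 0 := by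
    intro x y z hx hy hz
    refine le_antisymm ?_ (le_inf (abs_nonneg z) hw)
    calc |z| ⊓ w ≤ w ⊓ (|x| + |y|) := le_inf inf_le_right (inf_le_left.trans hz)
      _ ≤ w ⊓ |x| + w ⊓ |y| := inf_add_dist hw (abs_nonneg x) (abs_nonneg y)
      _ = 0 := by rw [inf_comm w, inf_comm w, hx, hy, add_zero]
  have habs : ∀ x : G, x ∈ {g : G | |g| ⊓ w = 0} ↔ |x| ⊓ w = 0 := fun x => Iff.rfl
  refine ⟨by simpa using inf_eq_left.2 hw, ?_, ?_, ?_, ?_⟩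
  · exact fun x y hx hy => key x y _ hx hy (myAbs_sub x y)
  · exact fun x y hx hy => key x y _ hx hy (myAbs_sup x y)
  · exact fun x y hx hy => key x y _ hx hy (myAbs_inf x y)
  · intro x y z hx hz h1 h2
    refine key x z y hx hz (myAbs_le ?_ ?_)
    · exact h2.trans ((le_abs_self z).trans (le_add_of_nonneg_left (abs_nonneg x)))
    · have h3 : -y ≤ -x := neg_le_neg_iff.2 h1
      exact (h3.trans (neg_le_abs x)).trans (le_add_of_nonneg_right (abs_nonneg z))

lemma gen_inter_eq_zero {u v : G} (hu : 0 ≤ u) (hv : 0 ≤ v) (huv : u ⊓ v = 0) :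
    lIdealGen u ∩ lIdealGen v = {0} := by
  ext y
  simp only [Set.mem_inter_iff, Set.mem_singleton_iff]
  constructor
  · rintro ⟨hyu, hyv⟩
    have h1 : |y| ⊓ v = 0 := by
      have : lIdealGen u ⊆ {g : G | |g| ⊓ v = 0} :=
        gen_subset (isLIdeal_polar hv) (by simpa [abs_of_nonneg hu] using huv)
      exact this hyu
    have h2 : |y| ⊓ |y| = 0 := by
      have : lIdealGen v ⊆ {g : G | |g| ⊓ |y| = 0} := by
        refine gen_subset (isLIdeal_polar (abs_nonneg y)) ?_
        simpa [abs_of_nonneg hv, inf_comm] using h1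
      exact this hyv
    have hy0 : |y| = 0 := by simpa using h2
    exact le_antisymm (le_of_le_of_eq (le_abs_self y) hy0)
      (neg_nonpos.1 ((neg_le_abs y).trans hy0.le))
  · rintro rfl
    exact ⟨(isLIdeal_gen u).1, (isLIdeal_gen v).1⟩

lemma gen_abs_eq (a : G) : lIdealGen |a| = lIdealGen a := by
  apply le_antisymm
  · exact gen_subset (isLIdeal_gen a) ((isLIdeal_gen a).abs_mem (mem_gen_self a))
  · exact gen_subset (isLIdeal_gen |a|)
      ((isLIdeal_gen |a|).mem_of_abs_le (mem_gen_self |a|) le_rfl)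

end Helpers

/-- In the lattice of principal ℓ-ideals of an abelian ℓ-group (where the meet
is intersection, the join is `lIdealJoin`, and the least element is `{0}`), for
every family `(𝐚ᵢ)` there is a family `(𝐜_{i,j})` of principal ℓ-ideals with
`𝐚ᵢ = (𝐚ᵢ ⊓ 𝐚ⱼ) ⊔ 𝐜_{i,j}`, `𝐜_{i,j} ⊓ 𝐜_{j,i} = 0`, and
`𝐜_{i,k} ≤ 𝐜_{i,j} ⊔ 𝐜_{j,k}`. -/
theorem stmt_11 {G : Type*} [Lattice G] [AddCommGroup G]
    [CovariantClass G G (· + ·) (· ≤ ·)] {ι : Type*}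
    (A : ι → {I : Set G // ∃ x : G, I = lIdealGen x}) :
    ∃ C : ι → ι → {I : Set G // ∃ x : G, I = lIdealGen x},
      (∀ i j : ι, (A i : Set G) = lIdealJoin ((A i : Set G) ∩ (A j : Set G)) (C i j)) ∧
      (∀ i j : ι, (C i j : Set G) ∩ (C j i : Set G) = {0}) ∧
      (∀ i j k : ι, (C i k : Set G) ⊆ lIdealJoin (C i j) (C j k)) := by
  classical
  -- choose generators and replace them by their absolute values
  set b : ι → G := fun i => |Classical.choose (A i).2| with hb
  have hbpos : ∀ i, 0 ≤ b i := fun i => abs_nonneg _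
  have hA : ∀ i, (A i : Set G) = lIdealGen (b i) := by
    intro i
    rw [hb, gen_abs_eq]
    exact Classical.choose_spec (A i).2
  -- the relative complements
  set c : ι → ι → G := fun i j => (b i - b j) ⊔ 0 with hc
  have hcpos : ∀ i j, 0 ≤ c i j := fun i j => le_sup_right
  have hcle : ∀ i j, c i j ≤ b i := fun i j =>
    sup_le (sub_le_self _ (hbpos j)) (hbpos i)
  have hsum : ∀ i j, (b i ⊓ b j) + c i j = b i := by
    intro i j
    have : c i j = (b i ⊔ b j) - b j := by
      rw [sup_sub, sub_self]
    rw [this, ← add_sub_assoc, inf_add_sup, add_sub_cancel_right]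
  refine ⟨fun i j => ⟨lIdealGen (c i j), c i j, rfl⟩, ?_, ?_, ?_⟩
  · intro i j
    show (A i : Set G) = lIdealJoin ((A i : Set G) ∩ (A j : Set G)) (lIdealGen (c i j))
    apply Set.Subset.antisymm
    · have h1 : b i ⊓ b j ∈ lIdealJoin ((A i : Set G) ∩ (A j : Set G)) (lIdealGen (c i j)) := by
        refine subset_join_left _ _ ⟨?_, ?_⟩
        · rw [hA i]
          exact (isLIdeal_gen (b i)).mem_of_abs_le (mem_gen_self _)
            (by rw [abs_of_nonneg (le_inf (hbpos i) (hbpos j))]; exact inf_le_left)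
        · rw [hA j]
          exact (isLIdeal_gen (b j)).mem_of_abs_le (mem_gen_self _)
            (by rw [abs_of_nonneg (le_inf (hbpos i) (hbpos j))]; exact inf_le_right)
      have h2 : c i j ∈ lIdealJoin ((A i : Set G) ∩ (A j : Set G)) (lIdealGen (c i j)) :=
        subset_join_right _ _ (mem_gen_self _)
      have hbi := (isLIdeal_join ((A i : Set G) ∩ (A j : Set G)) (lIdealGen (c i j))).add_mem h1 h2
      rw [hsum i j] at hbi
      intro x hx
      rw [hA i] at hx
      exact gen_subset (isLIdeal_join _ _) hbi hx
    · have hAi : IsLIdeal (A i : Set G) := by rw [hA i]; exact isLIdeal_gen _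
      refine join_subset hAi Set.inter_subset_left ?_
      have hbiA : b i ∈ (A i : Set G) := by rw [hA i]; exact mem_gen_self _
      have hcij : c i j ∈ (A i : Set G) :=
        hAi.mem_of_abs_le hbiA (by rw [abs_of_nonneg (hcpos i j)]; exact hcle i j)
      exact gen_subset hAi hcij
  · intro i j
    show lIdealGen (c i j) ∩ lIdealGen (c j i) = {0}
    refine gen_inter_eq_zero (hcpos i j) (hcpos j i) ?_
    have h := posPart_inf_negPart_eq_zero (b i - b j)
    rw [posPart_def, negPart_def, neg_sub] at h
    exact h
  · intro i j k
    show lIdealGen (c i k) ⊆ lIdealJoin (lIdealGen (c i j)) (lIdealGen (c j k))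
    have hJ := isLIdeal_join (lIdealGen (c i j)) (lIdealGen (c j k))
    have hmem : c i j + c j k ∈ lIdealJoin (lIdealGen (c i j)) (lIdealGen (c j k)) :=
      hJ.add_mem (subset_join_left _ _ (mem_gen_self _))
        (subset_join_right _ _ (mem_gen_self _))
    refine gen_subset hJ ?_
    refine hJ.mem_of_abs_le hmem ?_
    rw [abs_of_nonneg (hcpos i k)]
    have hsplit : b i - b k = (b i - b j) + (b j - b k) := by abel
    calc c i k = ((b i - b j) + (b j - b k)) ⊔ 0 := by
          show (b i - b k) ⊔ 0 = _
          rw [← hsplit]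
      _ ≤ ((b i - b j) ⊔ 0) + ((b j - b k) ⊔ 0) := by
          refine sup_le (add_le_add le_sup_left le_sup_left) ?_
          exact add_nonneg le_sup_right le_sup_right
      _ = c i j + c j k := rfl
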